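/- arXiv:1812.01534 — 2 statements merged into one kernel-verified Lean document; each statement's English description precedes it below -/
import Mathlib

section
/- Let G be a finite triangle-free simple graph, λ > 0, and let 𝐈 be a random independent set drawn from the hard-core model on G at fugacity λ. Fix v ∈ V(G) and let 𝐙 denote the number of uncovered neighbours of v with respect to 𝐈. Then Pr(v ∈ 𝐈) = (λ/(1+λ))·𝔼[(1+λ)^{-𝐙}], and consequently Pr(v ∈ 𝐈) ≥ (λ/(1+λ))·(1+λ)^{-𝔼𝐙}. -/
/-- A finite set of vertices is independent in `G`. -/
def IndepFinset {V : Type*} (G : SimpleGraph V) (s : Finset V) : Prop :=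
  ∀ u ∈ s, ∀ v ∈ s, ¬ G.Adj u v

instance {V : Type*} (G : SimpleGraph V) [DecidableRel G.Adj] (s : Finset V) :
    Decidable (IndepFinset G s) :=
  inferInstanceAs (Decidable (∀ u ∈ s, ∀ v ∈ s, ¬ G.Adj u v))

/-- The probability that the hard-core model on `G` at fugacity `lam` produces the set
`I`: it is `lam^|I| / Z_G(lam)` if `I` is independent, and `0` otherwise. -/
noncomputable def hcProb {V : Type*} [Fintype V] (G : SimpleGraph V) [DecidableRel G.Adj]
    (lam : ℝ) (I : Finset V) : ℝ :=
  (if IndepFinset G I then lam ^ I.card else 0) /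
    ∑ J : Finset V, if IndepFinset G J then lam ^ J.card else 0

/-!
Write `w(I) = λ^|I|` for independent `I` (and `0` otherwise), `N = N(v)`, and let `B` be the
`w`-mass of the independent sets avoiding `N ∪ {v}`. Adding `v` to such a set shows that the
`w`-mass of the sets containing `v` is `λ B`. A set `I ∌ v` splits as `J ∪ A` with `J = I \ N`
and `A = I ∩ N`; as `G` is triangle-free, `N` is independent, so `J ∪ A` is independent exactly
when `J` is and `A` consists of neighbours of `v` left uncovered by `J`, and then `J ∪ A` has
the same uncovered neighbours of `v` as `J`. Summing `λ^|A|` over these `A` gives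
`(1 + λ)^𝐙`, so the sets `I ∌ v`, weighted by `(1 + λ)^{-𝐙}`, contribute `B` as well, and
`(1 + λ) Pr(v ∈ 𝐈) = λ 𝔼[(1 + λ)^{-𝐙}]`. The inequality is Jensen's for `t ↦ (1 + λ)^t`.
-/

open Finset

lemma sum_finset_eq_sum_disjoint_sum_powerset {α M : Type*} [Fintype α] [DecidableEq α]
    [AddCommMonoid M] (N : Finset α) (f : Finset α → M) :
    ∑ I, f I = ∑ J with Disjoint N J, ∑ A ∈ N.powerset, f (J ∪ A) := by
  rw [← sum_product' (f := fun J A => f (J ∪ A))]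
  refine sum_nbij' (fun I => (I \ N, I ∩ N)) (fun p => p.1 ∪ p.2) ?_ ?_ ?_ ?_ ?_
  · simp [sdiff_disjoint.symm, inter_subset_right]
  · simp
  · simp [sdiff_union_inter]
  · simp only [mem_product, mem_filter, mem_univ, true_and, mem_powerset, Prod.forall,
      Prod.mk.injEq]
    intro J A ⟨hJ, hA⟩
    constructor
    · rw [union_sdiff_distrib, sdiff_eq_self_of_disjoint hJ.symm, sdiff_eq_empty_iff_subset.2 hA,
        union_empty]
    · rw [union_inter_distrib_right, inter_eq_left.2 hA, disjoint_iff_inter_eq_empty.1 hJ.symm,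
        empty_union]
  · simp [sdiff_union_inter]

section IndepFinset

variable {V : Type*} {G : SimpleGraph V}

lemma IndepFinset.mono {s t : Finset V} (ht : IndepFinset G t) (hst : s ⊆ t) :
    IndepFinset G s := fun a ha b hb => ht a (hst ha) b (hst hb)

lemma indepFinset_insert [DecidableEq V] {v : V} {J : Finset V} :
    IndepFinset G (insert v J) ↔ IndepFinset G J ∧ ∀ x ∈ J, ¬ G.Adj v x := by
  simp only [IndepFinset, mem_insert]
  grind [G.irrefl, SimpleGraph.Adj.symm]

lemma indepFinset_union [DecidableEq V] {J A : Finset V} :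
    IndepFinset G (J ∪ A) ↔
      IndepFinset G J ∧ IndepFinset G A ∧ ∀ a ∈ A, ∀ x ∈ J, ¬ G.Adj a x := by
  simp only [IndepFinset, mem_union]
  grind [SimpleGraph.Adj.symm]

lemma indepFinset_neighborFinset [Fintype V] [DecidableRel G.Adj] (hG : G.CliqueFree 3)
    (v : V) : IndepFinset G (G.neighborFinset v) := by
  classical
  exact fun a ha b hb hab => hG {v, a, b} (SimpleGraph.is3Clique_triple_iff.mpr
    ⟨(G.mem_neighborFinset v a).1 ha, (G.mem_neighborFinset v b).1 hb, hab⟩)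

end IndepFinset

def hcWeight {V : Type*} (G : SimpleGraph V) [DecidableRel G.Adj] (lam : ℝ) (I : Finset V) :
    ℝ :=
  if IndepFinset G I then lam ^ #I else 0

def uncoveredNbrs {V : Type*} [Fintype V] [DecidableEq V] (G : SimpleGraph V)
    [DecidableRel G.Adj] (v : V) (I : Finset V) : Finset V :=
  {u ∈ G.neighborFinset v | G.neighborFinset u ∩ I = ∅}

section HardCoreMeasure

variable {V : Type*} [Fintype V] {G : SimpleGraph V} [DecidableRel G.Adj]

omit [Fintype V] in
lemma hcWeight_nonneg {lam : ℝ} (hlam : 0 ≤ lam) (I : Finset V) : 0 ≤ hcWeight G lam I := by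
  unfold hcWeight
  split_ifs <;> positivity

lemma sum_hcWeight_pos {lam : ℝ} (hlam : 0 ≤ lam) : 0 < ∑ I, hcWeight G lam I :=
  sum_pos' (fun I _ => hcWeight_nonneg hlam I)
    ⟨∅, mem_univ _, by simp [hcWeight, IndepFinset]⟩

lemma hcProb_eq_hcWeight_div (lam : ℝ) (I : Finset V) :
    hcProb G lam I = hcWeight G lam I / ∑ J, hcWeight G lam J := rfl

lemma sum_hcProb {lam : ℝ} (hlam : 0 ≤ lam) : ∑ I, hcProb G lam I = 1 := by
  simp only [hcProb_eq_hcWeight_div, ← sum_div]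
  exact div_self (sum_hcWeight_pos hlam).ne'

lemma hcProb_nonneg {lam : ℝ} (hlam : 0 ≤ lam) (I : Finset V) : 0 ≤ hcProb G lam I :=
  div_nonneg (hcWeight_nonneg hlam I) (sum_hcWeight_pos hlam).le

end HardCoreMeasure

section HardCore

variable {V : Type*} [Fintype V] [DecidableEq V] {G : SimpleGraph V} [DecidableRel G.Adj]

lemma mem_uncoveredNbrs {v u : V} {I : Finset V} :
    u ∈ uncoveredNbrs G v I ↔ G.Adj v u ∧ ∀ x ∈ I, ¬ G.Adj u x := by
  simp [uncoveredNbrs, eq_empty_iff_forall_notMem, imp_not_comm]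

lemma uncoveredNbrs_eq_empty_of_mem {v : V} {I : Finset V} (hv : v ∈ I) :
    uncoveredNbrs G v I = ∅ :=
  eq_empty_iff_forall_notMem.2 fun _ hu =>
    (mem_uncoveredNbrs.1 hu).2 v hv (mem_uncoveredNbrs.1 hu).1.symm

lemma uncoveredNbrs_union_of_subset (hG : G.CliqueFree 3) {v : V} {J A : Finset V}
    (hA : A ⊆ G.neighborFinset v) : uncoveredNbrs G v (J ∪ A) = uncoveredNbrs G v J := by
  ext u
  have hN := indepFinset_neighborFinset hG v
  simp only [mem_uncoveredNbrs, mem_union]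
  constructor
  · exact fun ⟨hvu, h⟩ => ⟨hvu, fun x hx => h x (.inl hx)⟩
  · rintro ⟨hvu, h⟩
    refine ⟨hvu, fun x hx => hx.elim (h x) fun hxA => ?_⟩
    exact hN u ((G.mem_neighborFinset v u).2 hvu) x (hA hxA)

lemma hcWeight_insert {lam : ℝ} {v : V} {J : Finset V} (hv : v ∉ J) :
    hcWeight G lam (insert v J) =
      if Disjoint (G.neighborFinset v) J then lam * hcWeight G lam J else 0 := by
  have : Disjoint (G.neighborFinset v) J ↔ ∀ x ∈ J, ¬ G.Adj v x := by
    simp [disjoint_right]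
  simp only [hcWeight, indepFinset_insert, card_insert_of_notMem hv, this]
  split_ifs <;> simp_all [pow_succ, mul_comm]

lemma hcWeight_union_of_subset_neighborFinset (hG : G.CliqueFree 3) {lam : ℝ} {v : V}
    {J A : Finset V} (hJ : Disjoint (G.neighborFinset v) J) (hA : A ⊆ G.neighborFinset v) :
    hcWeight G lam (J ∪ A) =
      if A ⊆ uncoveredNbrs G v J then hcWeight G lam J * lam ^ #A else 0 := by
  have hAU : A ⊆ uncoveredNbrs G v J ↔ ∀ a ∈ A, ∀ x ∈ J, ¬ G.Adj a x := by
    simp only [subset_iff, mem_uncoveredNbrs]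
    exact forall₂_congr fun a ha => and_iff_right ((G.mem_neighborFinset v a).1 (hA ha))
  have hAind := (indepFinset_neighborFinset hG v).mono hA
  simp only [hcWeight, indepFinset_union, hAind, true_and, hAU,
    card_union_of_disjoint (hJ.mono_left hA).symm]
  split_ifs <;> simp_all [pow_add]

lemma sum_hcWeight_mem (lam : ℝ) (v : V) :
    ∑ I with v ∈ I, hcWeight G lam I =
      lam * ∑ J with Disjoint (G.neighborFinset v) J ∧ v ∉ J, hcWeight G lam J := by
  calc ∑ I with v ∈ I, hcWeight G lam I
      = ∑ J with v ∉ J, hcWeight G lam (insert v J) :=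
        sum_nbij' (fun I => I.erase v) (insert v) (by simp) (by simp)
          (by simp +contextual [insert_erase]) (by simp +contextual)
          (by simp +contextual [insert_erase])
    _ = ∑ J with v ∉ J, if Disjoint (G.neighborFinset v) J then lam * hcWeight G lam J else 0 :=
        sum_congr rfl fun J hJ => hcWeight_insert (mem_filter.1 hJ).2
    _ = _ := by rw [← sum_filter, filter_filter, mul_sum, filter_congr fun _ _ => and_comm]

lemma sum_powerset_hcWeight_union_mul_rpow (hG : G.CliqueFree 3) {lam : ℝ}
    (hlam : 1 + lam ≠ 0) {v : V} {J : Finset V} (hJ : Disjoint (G.neighborFinset v) J) :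
    ∑ A ∈ (G.neighborFinset v).powerset,
        hcWeight G lam (J ∪ A) * (1 + lam) ^ (-(#(uncoveredNbrs G v (J ∪ A)) : ℝ)) =
      hcWeight G lam J := by
  set U := uncoveredNbrs G v J
  have hU : {A ∈ (G.neighborFinset v).powerset | A ⊆ U} = U.powerset := by
    ext A
    simp only [mem_filter, mem_powerset, and_iff_right_iff_imp]
    exact fun h => h.trans (filter_subset _ _)
  have hbinom : ∑ A ∈ U.powerset, lam ^ #A = (1 + lam) ^ #U := by
    simpa [add_comm] using sum_pow_mul_eq_add_pow lam 1 U
  calc _ = ∑ A ∈ (G.neighborFinset v).powerset,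
          if A ⊆ U then hcWeight G lam J * (1 + lam) ^ (-(#U : ℝ)) * lam ^ #A else 0 :=
        sum_congr rfl fun A hA => by
          rw [uncoveredNbrs_union_of_subset hG (mem_powerset.1 hA),
            hcWeight_union_of_subset_neighborFinset hG hJ (mem_powerset.1 hA)]
          split_ifs <;> ring
    _ = hcWeight G lam J * (1 + lam) ^ (-(#U : ℝ)) * (1 + lam) ^ #U := by
        rw [← sum_filter, hU, ← mul_sum, hbinom]
    _ = hcWeight G lam J := by
        rw [Real.rpow_neg_natCast, zpow_neg, zpow_natCast, mul_assoc,
          inv_mul_cancel₀ (pow_ne_zero _ hlam), mul_one]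

lemma sum_hcWeight_not_mem_mul_rpow (hG : G.CliqueFree 3) {lam : ℝ} (hlam : 1 + lam ≠ 0)
    (v : V) :
    ∑ I with v ∉ I, hcWeight G lam I * (1 + lam) ^ (-(#(uncoveredNbrs G v I) : ℝ)) =
      ∑ J with Disjoint (G.neighborFinset v) J ∧ v ∉ J, hcWeight G lam J := by
  rw [sum_filter, sum_finset_eq_sum_disjoint_sum_powerset (G.neighborFinset v), ← filter_filter,
    sum_filter (fun J => v ∉ J)]
  refine sum_congr rfl fun J hJ => ?_
  have hvA : ∀ A ∈ (G.neighborFinset v).powerset, v ∉ A := fun A hA hv =>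
    G.irrefl ((G.mem_neighborFinset v v).1 (mem_powerset.1 hA hv))
  by_cases hvJ : v ∈ J
  · simp [hvJ]
  · rw [if_pos hvJ, ← sum_powerset_hcWeight_union_mul_rpow hG hlam (mem_filter.1 hJ).2]
    exact sum_congr rfl fun A hA => if_pos (by simp [hvJ, hvA A hA])

lemma one_add_mul_sum_hcWeight_mem (hG : G.CliqueFree 3) {lam : ℝ} (hlam : 1 + lam ≠ 0)
    (v : V) :
    (1 + lam) * ∑ I with v ∈ I, hcWeight G lam I =
      lam * ∑ I, hcWeight G lam I * (1 + lam) ^ (-(#(uncoveredNbrs G v I) : ℝ)) := by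
  have hmem : ∑ I with v ∈ I, hcWeight G lam I * (1 + lam) ^ (-(#(uncoveredNbrs G v I) : ℝ)) =
      ∑ I with v ∈ I, hcWeight G lam I := sum_congr rfl fun I hI => by
    simp [uncoveredNbrs_eq_empty_of_mem (mem_filter.1 hI).2]
  rw [← sum_filter_add_sum_filter_not univ (v ∈ ·), hmem,
    sum_hcWeight_not_mem_mul_rpow hG hlam v, sum_hcWeight_mem]
  ring

lemma sum_hcProb_mem (hG : G.CliqueFree 3) {lam : ℝ} (hlam : 1 + lam ≠ 0) (v : V) :
    (∑ I, if v ∈ I then hcProb G lam I else 0) =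
      lam / (1 + lam) * ∑ I, hcProb G lam I * (1 + lam) ^ (-(#(uncoveredNbrs G v I) : ℝ)) := by
  simp only [← sum_filter, hcProb_eq_hcWeight_div, ← sum_div, div_mul_eq_mul_div]
  rw [← mul_div_assoc, ← one_add_mul_sum_hcWeight_mem hG hlam v]
  field_simp

end HardCore

/-- In the hard-core model on a triangle-free graph at fugacity `lam > 0`, writing `𝐙`
for the number of uncovered neighbours of a fixed vertex `v`, we have
`Pr(v ∈ 𝐈) = (lam/(1+lam))·𝔼[(1+lam)^{-𝐙}]`, and consequently (by Jensen's inequality)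
`Pr(v ∈ 𝐈) ≥ (lam/(1+lam))·(1+lam)^{-𝔼𝐙}`. -/
theorem hard_core_occupancy_formula {V : Type*} [Fintype V] [DecidableEq V]
    (G : SimpleGraph V) [DecidableRel G.Adj] (hG : G.CliqueFree 3)
    (lam : ℝ) (hlam : 0 < lam) (v : V) :
    (∑ I : Finset V, if v ∈ I then hcProb G lam I else 0) =
      lam / (1 + lam) *
        ∑ I : Finset V, hcProb G lam I *
          (1 + lam) ^
            (-((((G.neighborFinset v).filter fun u =>
                G.neighborFinset u ∩ I = ∅).card : ℝ))) ∧
    lam / (1 + lam) *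
        (1 + lam) ^
          (-(∑ I : Finset V, hcProb G lam I *
            ((((G.neighborFinset v).filter fun u =>
                G.neighborFinset u ∩ I = ∅).card : ℝ)))) ≤
      ∑ I : Finset V, if v ∈ I then hcProb G lam I else 0 := by
  have hpos : 0 < 1 + lam := by linarith
  have hocc := sum_hcProb_mem hG hpos.ne' v
  refine ⟨hocc, ?_⟩
  rw [hocc]
  gcongr
  have hjensen := (convexOn_rpow_left hpos).map_sum_le (t := univ) (w := hcProb G lam)
    (p := fun I => -(#(uncoveredNbrs G v I) : ℝ)) (fun I _ => hcProb_nonneg hlam.le I)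
    (sum_hcProb hlam.le) (fun _ _ => Set.mem_univ _)
  simp only [smul_eq_mul, mul_neg, sum_neg_distrib] at hjensen
  exact hjensen
end

section
/- For every ε > 0 there exists D > 0 such that the following holds. Let G be a finite triangle-free simple graph on n ≥ 1 vertices whose degree sequence has geometric mean at least D, i.e. (Π_{v∈V(G)} deg(v))^{1/n} ≥ D. Then there exist disjoint sets A, B ⊆ V(G) with A independent in G, A ∪ B ≠ ∅, and 2·e_G(A,B)/(|A|+|B|) ≥ (2−ε)·(1/n)·Σ_{v∈V(G)} log deg(v), where e_G(A,B) is the number of edges of G with one endpoint in A and the other in B. -/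
/-!
Hard-core model. Choose an independent set `I` with weight `x ^ #I`, `x = ε / 32` (expectations
are sums over `indepFinsets` weighted by `x ^ #I`). Fix `v` and condition on `J = I \ N[v]`: if
`k` neighbours of `v` have no neighbour in `J`, then `I` is `insert v J` or `J ∪ S` for any set `S`
of those `k` neighbours, the latter being independent because `G` is triangle-free. This explicit
conditional law shows that `x · deg v · [v ∈ I] + (1 - x) · #(I ∩ N(v))` has expectation at least
`(1 - ε/4) log (deg v)` once `deg v` is large. Summed over `v`, these quantities add up to
`∑ a ∈ I, deg a`, so some independent `A` has `∑ a ∈ A, deg a ≥ (1 - ε/2) ∑ v, log (deg v)`.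
With `B = Aᶜ` one has `e(A, B) = ∑ a ∈ A, deg a` and `#A + #B = n`.
-/

open Finset Real

theorem Finset.sum_powerset_pow_card {α R : Type*} [CommSemiring R] (s : Finset α) (x : R) :
    ∑ t ∈ s.powerset, x ^ #t = (1 + x) ^ #s := by
  simpa [add_comm] using sum_pow_mul_eq_add_pow x 1 s

theorem Finset.sum_powerset_card_mul_pow_card {α R : Type*} [DecidableEq α] [CommRing R]
    (s : Finset α) (x : R) :
    (1 + x) * ∑ t ∈ s.powerset, (#t : R) * x ^ #t = #s * x * (1 + x) ^ #s := by
  induction s using Finset.induction_on with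
  | empty => simp
  | insert a s ha ih =>
    have hins : ∑ t ∈ s.powerset, (#(insert a t) : R) * x ^ #(insert a t) =
        x * ∑ t ∈ s.powerset, (#t : R) * x ^ #t + x * ∑ t ∈ s.powerset, x ^ #t := by
      rw [mul_sum, mul_sum, ← sum_add_distrib]
      refine sum_congr rfl fun t ht => ?_
      rw [card_insert_of_notMem fun hat => ha (mem_powerset.1 ht hat)]
      push_cast
      ring
    rw [sum_powerset_insert ha, hins, sum_powerset_pow_card, card_insert_of_notMem ha]
    push_cast
    linear_combination (1 + x) * ih

theorem Real.mul_le_mul_log_add_exp {t : ℝ} (ht : 0 < t) (u : ℝ) :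
    u * t ≤ t * log t + exp (u - 1) := by
  have h := add_one_le_exp (u - 1 - log t)
  rw [exp_sub _ (log t), exp_log ht, le_div_iff₀ ht] at h
  linarith

theorem Real.card_mul_log_le_sum_log_of_le_prod_rpow {ι : Type*} [Fintype ι] {f : ι → ℝ}
    (hf : ∀ i, 0 ≤ f i) (hι : 0 < Fintype.card ι) {D : ℝ} (hD : 0 < D)
    (h : D ≤ (∏ i, f i) ^ ((1 : ℝ) / Fintype.card ι)) :
    Fintype.card ι * log D ≤ ∑ i, log (f i) := by
  have hprod : 0 < ∏ i, f i := (prod_nonneg fun i _ => hf i).lt_of_ne fun h0 => by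
    rw [← h0, zero_rpow (by positivity)] at h
    exact hD.not_ge h
  have hlog := log_le_log hD h
  rw [log_rpow hprod, log_prod fun i _ h0 => hprod.ne' (prod_eq_zero (mem_univ i) h0),
    one_div, inv_mul_eq_div, le_div_iff₀ (by positivity)] at hlog
  linarith

open Filter Asymptotics in
theorem Real.isLittleO_rpow_id_atTop {r : ℝ} (hr : r < 1) :
    (fun d : ℝ => d ^ r) =o[atTop] id := by
  refine (isLittleO_iff_tendsto' ?_).2 ?_
  · filter_upwards [eventually_gt_atTop 0] with d hd h0 using absurd h0 hd.ne'
  · refine (tendsto_rpow_neg_atTop (sub_pos.2 hr)).congr' ?_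
    filter_upwards [eventually_gt_atTop 0] with d hd
    rw [id, rpow_neg hd.le, rpow_sub hd, rpow_one, inv_div]

open Filter Asymptotics in
theorem eventually_mul_log_add_rpow_le {x δ : ℝ} (hx : 0 < x) (hδ : 0 < δ) :
    ∀ᶠ d in atTop, x * log d + d ^ (1 - δ) ≤ x ^ 2 * d := by
  have h := ((isLittleO_log_id_atTop.const_mul_left x).add
    (isLittleO_rpow_id_atTop (by linarith : 1 - δ < 1))).bound (pow_pos hx 2)
  filter_upwards [h, eventually_ge_atTop 0] with d hd hd0
  rw [id, norm_of_nonneg hd0] at hd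
  exact (le_norm_self _).trans hd

/-- In the hard-core model with weight `x ^ #I`, condition on the part `J` of `I` outside `N[v]`,
and let `k` neighbours of `v` have no neighbour in `J`. The conditional partition function is
`x + (1 + x) ^ k` and the right-hand side is the conditional weight of
`x · d · [v ∈ I] + (1 - x) · #(I ∩ N(v))` for `d = deg v`, where `k x (1 + x) ^ (k - 1)` is
`∑ S, #S x ^ #S`. So `c` is at most that conditional expectation, whatever `J`. -/
def HardcoreLocalBound (x d c : ℝ) : Prop :=
  ∀ k : ℕ, c * (x + (1 + x) ^ k) ≤ x ^ 2 * d + (1 - x) * (k * x * (1 + x) ^ k / (1 + x))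

namespace HardcoreLocalBound

variable {x d c c' : ℝ}

theorem anti (h : HardcoreLocalBound x d c') (hc : c ≤ c') (hx : 0 ≤ x) :
    HardcoreLocalBound x d c := fun k =>
  (mul_le_mul_of_nonneg_right hc (by positivity)).trans (h k)

theorem zero (hx0 : 0 ≤ x) (hx1 : x ≤ 1) (hd : 0 ≤ d) : HardcoreLocalBound x d 0 := fun k => by
  rw [zero_mul]
  have : 0 ≤ 1 - x := by linarith
  positivity

theorem of_mul_add_exp_le (hx0 : 0 < x) (hx1 : x < 1)
    (h : x * c + exp (c * (1 + x) / (1 - x)) ≤ x ^ 2 * d) : HardcoreLocalBound x d c := by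
  intro k
  set t := (1 + x) ^ k
  set β := (1 - x) / (1 + x)
  have ht : 0 < t := by positivity
  have hβ0 : 0 < β := div_pos (by linarith) (by linarith)
  have hβ1 : β ≤ 1 := (div_le_one (by linarith)).2 (by linarith)
  have hfenchel : c * t ≤ β * (t * log t) + exp (c * (1 + x) / (1 - x)) := by
    have h1 := mul_le_mul_log_add_exp ht (c / β)
    have h2 : c / β = c * (1 + x) / (1 - x) := div_div_eq_mul_div c (1 - x) (1 + x)
    have h3 : exp (c / β - 1) ≤ exp (c / β) := exp_le_exp.2 (by linarith)
    have h4 : β * exp (c / β - 1) ≤ exp (c / β - 1) := by nlinarith [exp_pos (c / β - 1)]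
    rw [← h2]
    calc c * t = β * (c / β * t) := by field_simp
      _ ≤ β * (t * log t + exp (c / β - 1)) := mul_le_mul_of_nonneg_left h1 hβ0.le
      _ ≤ _ := by linarith
  have hlog : log t ≤ k * x := by
    rw [Real.log_pow]
    exact mul_le_mul_of_nonneg_left ((log_le_sub_one_of_pos (by linarith)).trans (by linarith))
      k.cast_nonneg
  have hβt : β * (t * log t) ≤ (1 - x) * (k * x * t / (1 + x)) := by
    calc β * (t * log t) ≤ β * (t * (k * x)) :=
          mul_le_mul_of_nonneg_left (mul_le_mul_of_nonneg_left hlog ht.le) hβ0.le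
      _ = _ := by ring
  nlinarith

end HardcoreLocalBound

open Filter in
theorem exists_hardcoreLocalBound_log {ε : ℝ} (hε : 0 < ε) (hε1 : ε ≤ 1) :
    ∃ D₁ : ℝ, 1 ≤ D₁ ∧ ∀ d : ℝ, 0 ≤ d →
      HardcoreLocalBound (ε / 32) d ((1 - ε / 4) * (log d - log D₁)) := by
  -- The shift by `log D₁` makes `c ≤ 0`, where the bound is trivial, below the threshold `D₁`,
  -- while keeping `c` affine in `log d`.
  obtain ⟨D₀, hD₀⟩ := eventually_atTop.1
    (eventually_mul_log_add_rpow_le (x := ε / 32) (δ := ε / 8) (by positivity) (by positivity))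
  have hx0 : 0 < ε / 32 := by positivity
  have hx1 : ε / 32 < 1 := by linarith
  set D₁ := max D₀ 1
  have hD₁ : 0 ≤ log D₁ := log_nonneg (le_max_right _ _)
  refine ⟨D₁, le_max_right _ _, fun d hd => ?_⟩
  by_cases hdD : D₁ ≤ d
  · have hd1 : 1 ≤ d := (le_max_right _ _).trans hdD
    have hlogd : 0 ≤ log d := log_nonneg hd1
    refine HardcoreLocalBound.anti (c' := (1 - ε / 4) * log d) ?_ (by nlinarith) hx0.le
    refine .of_mul_add_exp_le hx0 hx1 ((add_le_add ?_ ?_).trans (hD₀ d (le_of_max_le_left hdD)))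
    · exact mul_le_mul_of_nonneg_left (by nlinarith) hx0.le
    · rw [rpow_def_of_pos (by linarith), exp_le_exp, div_le_iff₀ (by linarith)]
      nlinarith [mul_nonneg hlogd hε.le, mul_nonneg hlogd (mul_nonneg hε.le hε.le)]
  · have hlog : log d ≤ log D₁ := by
      rcases hd.eq_or_lt with rfl | hd
      · rwa [log_zero]
      · exact log_le_log hd (not_le.1 hdD).le
    exact (HardcoreLocalBound.zero hx0.le hx1.le hd).anti
      (mul_nonpos_of_nonneg_of_nonpos (by linarith) (by linarith)) hx0.le

namespace IndepFinset

variable {V : Type*} {G : SimpleGraph V} {s t : Finset V}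

theorem mono_s10 (h : IndepFinset G t) (hst : s ⊆ t) : IndepFinset G s :=
  fun u hu w hw => h u (hst hu) w (hst hw)

theorem union [DecidableEq V] (hs : IndepFinset G s) (ht : IndepFinset G t)
    (hst : ∀ a ∈ s, ∀ b ∈ t, ¬G.Adj a b) : IndepFinset G (s ∪ t) := by
  intro u hu w hw
  rcases mem_union.1 hu with hu | hu <;> rcases mem_union.1 hw with hw | hw
  exacts [hs u hu w hw, hst u hu w hw, fun h => hst w hw u hu h.symm, ht u hu w hw]

theorem insert [DecidableEq V] {a : V} (hs : IndepFinset G s) (ha : ∀ b ∈ s, ¬G.Adj a b) :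
    IndepFinset G (insert a s) := by
  rw [insert_eq]
  exact union (fun u hu w hw => by simp_all) hs (by simpa using ha)

theorem of_subset_neighborFinset {v : V} [Fintype (G.neighborSet v)] (hG : G.CliqueFree 3)
    (hs : s ⊆ G.neighborFinset v) : IndepFinset G s := fun u hu w hw huw =>
  G.isIndepSet_neighborSet_of_triangleFree hG v
    (by simpa using hs hu) (by simpa using hs hw) (G.ne_of_adj huw) huw

theorem neighborFinset_inter_compl [Fintype V] [DecidableEq V] [DecidableRel G.Adj]
    (hA : IndepFinset G s) {a : V} (ha : a ∈ s) : G.neighborFinset a ∩ sᶜ = G.neighborFinset a :=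
  inter_eq_left.2 fun b hb =>
    mem_compl.2 fun hbA => hA a ha b hbA ((G.mem_neighborFinset a b).1 hb)

end IndepFinset

namespace SimpleGraph

variable {V : Type*} [Fintype V] [DecidableEq V] (G : SimpleGraph V) [DecidableRel G.Adj]

instance : DecidablePred (IndepFinset G) := fun s =>
  inferInstanceAs (Decidable (∀ u ∈ s, ∀ v ∈ s, ¬G.Adj u v))

def indepFinsets : Finset (Finset V) := {I | IndepFinset G I}

@[simp] theorem mem_indepFinsets {I : Finset V} : I ∈ G.indepFinsets ↔ IndepFinset G I := by
  simp [indepFinsets]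

def uncoveredNeighborFinset (v : V) (J : Finset V) : Finset V :=
  {u ∈ G.neighborFinset v | ∀ w ∈ J, ¬G.Adj u w}

theorem uncoveredNeighborFinset_subset (v : V) (J : Finset V) :
    G.uncoveredNeighborFinset v J ⊆ G.neighborFinset v :=
  filter_subset _ _

variable {G}

theorem indepFinset_and_sdiff_eq_iff (hG : G.CliqueFree 3) {v : V} {J I : Finset V}
    (hJ : IndepFinset G J)(hJv : Disjoint J (insert v (G.neighborFinset v))) :
    (IndepFinset G I ∧ I \ insert v (G.neighborFinset v) = J) ↔
      I = insert v J ∨ ∃ S ⊆ G.uncoveredNeighborFinset v J, I = J ∪ S := by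
  set C := insert v (G.neighborFinset v)
  have hvJ : v ∉ J := fun h => Finset.disjoint_left.1 hJv h (mem_insert_self _ _)
  have hNJ : ∀ u ∈ G.neighborFinset v, u ∉ J := fun u hu h =>
    Finset.disjoint_left.1 hJv h (mem_insert_of_mem hu)
  constructor
  · rintro ⟨hI, rfl⟩
    have hsplit := sdiff_union_inter I C
    by_cases hv : v ∈ I
    · left
      have : I ∩ C = {v} := by
        refine eq_singleton_iff_unique_mem.2 ⟨mem_inter.2 ⟨hv, mem_insert_self _ _⟩, ?_⟩
        intro u hu
        obtain ⟨huI, huC⟩ := mem_inter.1 hu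
        rcases mem_insert.1 huC with rfl | huN
        · rfl
        · exact absurd ((mem_neighborFinset _ _ _).1 huN) (hI v hv u huI)
      rw [this, union_singleton] at hsplit
      exact hsplit.symm
    · right
      refine ⟨I ∩ C, fun u hu => ?_, hsplit.symm⟩
      obtain ⟨huI, huC⟩ := mem_inter.1 hu
      have huN : u ∈ G.neighborFinset v := by
        rcases mem_insert.1 huC with rfl | h
        · exact absurd huI hv
        · exact h
      exact mem_filter.2 ⟨huN, fun w hw => hI u huI w (mem_sdiff.1 hw).1⟩
  · rintro (rfl | ⟨S, hS, rfl⟩)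
    · refine ⟨hJ.insert fun w hw hvw => hNJ w ((mem_neighborFinset _ _ _).2 hvw) hw, ?_⟩
      rw [insert_sdiff_of_mem _ (mem_insert_self _ _), hJv.sdiff_eq_left]
    · have hSN := hS.trans (G.uncoveredNeighborFinset_subset v J)
      refine ⟨hJ.union (.of_subset_neighborFinset hG hSN) fun a ha b hb hab => ?_, ?_⟩
      · exact (mem_filter.1 (hS hb)).2 a ha hab.symm
      · rw [union_sdiff_distrib, hJv.sdiff_eq_left, sdiff_eq_empty_iff_subset.2
          (hSN.trans (subset_insert _ _)), union_empty]

theorem sum_indepFinsets_eq_sum_fiber {M : Type*} [AddCommMonoid M] (hG : G.CliqueFree 3)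
    (v : V) (f : Finset V → M) :
    ∑ I ∈ G.indepFinsets, f I =
      ∑ J ∈ G.indepFinsets with Disjoint J (insert v (G.neighborFinset v)),
        (f (insert v J) + ∑ S ∈ (G.uncoveredNeighborFinset v J).powerset, f (J ∪ S)) := by
  set C := insert v (G.neighborFinset v)
  have hmaps : ∀ I ∈ G.indepFinsets, I \ C ∈ {J ∈ G.indepFinsets | Disjoint J C} := fun I hI =>
    mem_filter.2 ⟨(G.mem_indepFinsets.2 ((G.mem_indepFinsets.1 hI).mono_s10 sdiff_subset)),
      sdiff_disjoint⟩
  rw [← sum_fiberwise_of_maps_to hmaps]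
  refine sum_congr rfl fun J hJ => ?_
  obtain ⟨hJ, hJC⟩ := mem_filter.1 hJ
  rw [G.mem_indepFinsets] at hJ
  have hfiber : {I ∈ G.indepFinsets | I \ C = J} =
      insert (insert v J) ((G.uncoveredNeighborFinset v J).powerset.image (J ∪ ·)) := by
    ext I
    simp only [mem_filter, G.mem_indepFinsets, mem_insert, mem_image, mem_powerset,
      eq_comm (b := I)]
    exact indepFinset_and_sdiff_eq_iff hG hJ hJC
  have hdisj : ∀ S ⊆ G.uncoveredNeighborFinset v J, Disjoint J S := fun S hS =>
    hJC.mono_right ((hS.trans (G.uncoveredNeighborFinset_subset v J)).trans (subset_insert _ _))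
  have hvS : insert v J ∉ (G.uncoveredNeighborFinset v J).powerset.image (J ∪ ·) := by
    simp only [mem_image, mem_powerset, not_exists, not_and]
    intro S hS hSJ
    have hv : v ∈ J ∪ S := hSJ ▸ mem_insert_self v J
    rcases mem_union.1 hv with hv | hv
    · exact Finset.disjoint_left.1 hJC hv (mem_insert_self _ _)
    · exact G.irrefl ((G.mem_neighborFinset _ _).1
        (G.uncoveredNeighborFinset_subset v J (hS hv)))
  rw [hfiber, sum_insert hvS, sum_image fun S₁ h₁ S₂ h₂ h => ?_]
  rw [← union_sdiff_cancel_left (hdisj S₁ (mem_powerset.1 h₁)),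
    ← union_sdiff_cancel_left (hdisj S₂ (mem_powerset.1 h₂))]
  exact congrArg (· \ J) h

theorem sum_indepFinsets_pow_card_mul_le (hG : G.CliqueFree 3) {x : ℝ} (hx : 0 ≤ x) (v : V)
    {c : ℝ} (hc : HardcoreLocalBound x (G.degree v) c) :
    ∑ I ∈ G.indepFinsets, x ^ #I * c ≤ ∑ I ∈ G.indepFinsets, x ^ #I *
      (x * (if v ∈ I then (G.degree v : ℝ) else 0) + (1 - x) * #(I ∩ G.neighborFinset v)) := by
  rw [← sub_nonpos, ← sum_sub_distrib, sum_indepFinsets_eq_sum_fiber hG v]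
  refine sum_nonpos fun J hJ => ?_
  obtain ⟨hvJ, hJN⟩ := disjoint_insert_right.1 (mem_filter.1 hJ).2
  set F := G.uncoveredNeighborFinset v J
  have hvN : v ∉ G.neighborFinset v := by simp
  have hins : #(insert v J ∩ G.neighborFinset v) = 0 := by
    rw [card_eq_zero, insert_inter_of_notMem hvN, disjoint_iff_inter_eq_empty.1 hJN]
  have hfirst : x ^ #(insert v J) * c - x ^ #(insert v J) * (x * (if v ∈ insert v J then
      (G.degree v : ℝ) else 0) + (1 - x) * #(insert v J ∩ G.neighborFinset v)) =
        x ^ #J * (x * c - x ^ 2 * G.degree v) := by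
    rw [card_insert_of_notMem hvJ, if_pos (mem_insert_self _ _), hins]
    push_cast
    ring
  have hrest : ∀ S ∈ F.powerset, x ^ #(J ∪ S) * c - x ^ #(J ∪ S) * (x * (if v ∈ J ∪ S then
      (G.degree v : ℝ) else 0) + (1 - x) * #((J ∪ S) ∩ G.neighborFinset v)) =
        x ^ #J * (x ^ #S * c - (1 - x) * (#S * x ^ #S)) := by
    intro S hS
    have hSN : S ⊆ G.neighborFinset v :=
      (mem_powerset.1 hS).trans (G.uncoveredNeighborFinset_subset v J)
    have hv : v ∉ J ∪ S := by simpa [hvJ] using fun h => hvN (hSN h)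
    have hinter : (J ∪ S) ∩ G.neighborFinset v = S := by
      rw [union_inter_distrib_right, disjoint_iff_inter_eq_empty.1 hJN, empty_union,
        inter_eq_left.2 hSN]
    rw [card_union_of_disjoint (hJN.mono_right hSN), if_neg hv, hinter, pow_add]
    ring
  rw [hfirst, sum_congr rfl hrest, ← mul_sum, ← mul_add]
  refine mul_nonpos_of_nonneg_of_nonpos (pow_nonneg hx _) ?_
  have hderiv : ∑ S ∈ F.powerset, (#S : ℝ) * x ^ #S = #F * x * (1 + x) ^ #F / (1 + x) :=
    eq_div_of_mul_eq (by positivity) (by rw [mul_comm, sum_powerset_card_mul_pow_card])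
  rw [sum_sub_distrib, ← sum_mul, ← mul_sum, sum_powerset_pow_card, hderiv]
  linarith [hc #F]

theorem sum_card_inter_neighborFinset (I : Finset V) :
    ∑ v, #(I ∩ G.neighborFinset v) = ∑ a ∈ I, G.degree a := by
  calc ∑ v, #(I ∩ G.neighborFinset v) = ∑ v, #{a ∈ I | G.Adj a v} := by
        simp_rw [← filter_mem_eq_inter, mem_neighborFinset, adj_comm]
    _ = ∑ a ∈ I, #{v | G.Adj a v} := (sum_card_bipartiteAbove_eq_sum_card_bipartiteBelow _).symm
    _ = ∑ a ∈ I, G.degree a := by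
      simp_rw [← neighborFinset_eq_filter, card_neighborFinset_eq_degree]

theorem exists_indepFinset_sum_le_sum_degree (hG : G.CliqueFree 3) {x : ℝ} (hx : 0 < x)
    {c : V → ℝ} (hc : ∀ v, HardcoreLocalBound x (G.degree v) (c v)) :
    ∃ A, IndepFinset G A ∧ ∑ v, c v ≤ ∑ a ∈ A, (G.degree a : ℝ) := by
  have hsum : ∑ I ∈ G.indepFinsets, x ^ #I * ∑ v, c v ≤
      ∑ I ∈ G.indepFinsets, x ^ #I * ∑ a ∈ I, (G.degree a : ℝ) := calc
    _ = ∑ v, ∑ I ∈ G.indepFinsets, x ^ #I * c v := by simp_rw [mul_sum]; exact sum_comm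
    _ ≤ ∑ v, ∑ I ∈ G.indepFinsets, x ^ #I * (x * (if v ∈ I then (G.degree v : ℝ) else 0) +
        (1 - x) * #(I ∩ G.neighborFinset v)) :=
      sum_le_sum fun v _ => sum_indepFinsets_pow_card_mul_le hG hx.le v (hc v)
    _ = _ := by
      rw [sum_comm]
      refine sum_congr rfl fun I _ => ?_
      rw [← mul_sum, sum_add_distrib, ← mul_sum, ← mul_sum, sum_ite_mem, univ_inter]
      rw_mod_cast [sum_card_inter_neighborFinset]
      ring
  obtain ⟨A, hA, hle⟩ := exists_le_of_sum_le ⟨∅, by simp [IndepFinset]⟩ hsum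
  exact ⟨A, G.mem_indepFinsets.1 hA, le_of_mul_le_mul_left hle (pow_pos hx _)⟩

end SimpleGraph

theorem exists_indepFinset_mul_sum_log_degree_le {ε : ℝ} (hε : 0 < ε) (hε1 : ε ≤ 1) :
    ∃ D : ℝ, 0 < D ∧ ∀ (V : Type*) [Fintype V] [DecidableEq V] (G : SimpleGraph V)
      [DecidableRel G.Adj], G.CliqueFree 3 →
        Fintype.card V * log D ≤ ∑ v, log (G.degree v) →
        ∃ A, IndepFinset G A ∧
          (1 - ε / 2) * ∑ v, log (G.degree v) ≤ ∑ a ∈ A, (G.degree a : ℝ) := by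
  obtain ⟨D₁, hD₁, hbound⟩ := exists_hardcoreLocalBound_log hε hε1
  have hD₁0 : 0 < D₁ := one_pos.trans_le hD₁
  -- `D = D₁ ^ (8 / ε)` makes the loss `n log D₁` at most `ε / 8 · ∑ v, log (deg v)`.
  refine ⟨D₁ ^ (8 / ε), rpow_pos_of_pos hD₁0 _, fun V _ _ G _ hG hL => ?_⟩
  obtain ⟨A, hA, hsum⟩ := G.exists_indepFinset_sum_le_sum_degree hG (by positivity : 0 < ε / 32)
    fun v => hbound (G.degree v) (G.degree v).cast_nonneg
  refine ⟨A, hA, le_trans ?_ hsum⟩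
  rw [← mul_sum, sum_sub_distrib, sum_const, card_univ, nsmul_eq_mul]
  rw [log_rpow hD₁0] at hL
  have hL0 : 0 ≤ ∑ v, log (G.degree v) := sum_nonneg fun v _ => log_natCast_nonneg _
  have hlogD₁ : 0 ≤ Fintype.card V * log D₁ :=
    mul_nonneg (Nat.cast_nonneg _) (log_nonneg hD₁)
  have hcard : Fintype.card V * log D₁ ≤ ε / 8 * ∑ v, log (G.degree v) := by
    have := mul_le_mul_of_nonneg_left hL (by positivity : 0 ≤ ε / 8)
    field_simp at this ⊢
    linarith
  nlinarith

/-- Theorem 5 of the paper (in `ε`-form): every triangle-free graph on `n ≥ 1` vertices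
whose degree sequence has sufficiently large geometric mean contains a semi-bipartite
induced subgraph (all edges between an independent set `A` and a disjoint set `B`) whose
average degree `2·e(A,B)/(|A|+|B|)` is at least `(2-ε)·(1/n)·Σ_v log deg(v)`. -/
theorem semibipartite_induced_subgraph (ε : ℝ) (hε : 0 < ε) :
    ∃ D : ℝ, 0 < D ∧
      ∀ (V : Type) [Fintype V] [DecidableEq V] (G : SimpleGraph V) [DecidableRel G.Adj],
        G.CliqueFree 3 → 1 ≤ Fintype.card V →
        D ≤ (∏ v : V, (G.degree v : ℝ)) ^ ((1 : ℝ) / (Fintype.card V : ℝ)) →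
        ∃ A B : Finset V, Disjoint A B ∧ IndepFinset G A ∧ (A ∪ B).Nonempty ∧
          (2 - ε) * ((1 / (Fintype.card V : ℝ)) * ∑ v : V, Real.log (G.degree v)) ≤
            2 * (∑ a ∈ A, ((G.neighborFinset a ∩ B).card : ℝ)) /
              ((A.card : ℝ) + (B.card : ℝ)) := by
  obtain ⟨D, hD, hmain⟩ :=
    exists_indepFinset_mul_sum_log_degree_le (lt_min hε one_pos) (min_le_right ε 1)
  refine ⟨D, hD, fun V _ _ G _ hG hn hGM => ?_⟩
  obtain ⟨A, hA, hsum⟩ := hmain V G hG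
    (card_mul_log_le_sum_log_of_le_prod_rpow (fun v => (G.degree v).cast_nonneg) hn hD hGM)
  refine ⟨A, Aᶜ, disjoint_compl_right, hA, ?_, ?_⟩
  · rw [union_compl]
    exact univ_nonempty_iff.2 (Fintype.card_pos_iff.1 hn)
  · have hL0 : 0 ≤ ∑ v, log (G.degree v) := sum_nonneg fun v _ => log_natCast_nonneg _
    have hB : ∑ a ∈ A, (#(G.neighborFinset a ∩ Aᶜ) : ℝ) = ∑ a ∈ A, (G.degree a : ℝ) :=
      sum_congr rfl fun a ha => by
        rw [hA.neighborFinset_inter_compl ha, G.card_neighborFinset_eq_degree]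
    have hcard : (#A : ℝ) + #Aᶜ = Fintype.card V := by exact_mod_cast card_add_card_compl A
    rw [hB, hcard, le_div_iff₀ (by exact_mod_cast hn)]
    calc (2 - ε) * (1 / (Fintype.card V : ℝ) * ∑ v, log (G.degree v)) * Fintype.card V
        = (2 - ε) * ∑ v, log (G.degree v) := by field_simp
      _ ≤ 2 * ∑ a ∈ A, (G.degree a : ℝ) := by nlinarith [min_le_left ε 1]
end
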